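/- arXiv:1302.5295 — 5 statements merged into one kernel-verified Lean document; each statement's English description precedes it below -/
import Mathlib

section
/- Let 0<s<1, 1<p<∞, and let G ⊂ ℝⁿ be a proper domain. For every f ∈ W^{s,p}(G), the zero extension E₀f (equal to f on G and 0 outside G) satisfies ‖E₀f‖_{W^{s,p}(ℝⁿ)} ≤ C ( ‖f‖_{W^{s,p}(G)} + (∫_G |f(x)|^p dist(x,∂G)^{−sp} dx)^{1/p} ), with C depending only on n, s, p. -/
open MeasureTheory Metric Set
open scoped ENNReal

noncomputable section

/-- The `p`-th power `L^p` integral of `f` over `A`. -/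
def lpInt (n : ℕ) (p : ℝ) (A : Set (EuclideanSpace ℝ (Fin n)))
    (f : EuclideanSpace ℝ (Fin n) → ℝ) : ℝ≥0∞ :=
  ∫⁻ x in A, ENNReal.ofReal (|f x| ^ p)

/-- The `p`-th power of the Gagliardo seminorm of `f` over `A`. -/
def gagliardo (n : ℕ) (s p : ℝ) (A : Set (EuclideanSpace ℝ (Fin n)))
    (f : EuclideanSpace ℝ (Fin n) → ℝ) : ℝ≥0∞ :=
  ∫⁻ x in A, ∫⁻ y in A, ENNReal.ofReal (|f x - f y| ^ p / ‖x - y‖ ^ ((n : ℝ) + s * p))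

/-- The `W^{s,p}(A)` norm of `f`. -/
def sobNorm (n : ℕ) (s p : ℝ) (A : Set (EuclideanSpace ℝ (Fin n)))
    (f : EuclideanSpace ℝ (Fin n) → ℝ) : ℝ≥0∞ :=
  (lpInt n p A f) ^ (1 / p) + (gagliardo n s p A f) ^ (1 / p)

/-! For `x ∈ G`, the points of `Gᶜ` lie outside the ball of radius `d(x) = dist(x, ∂G)` around `x`,
so by translation and scaling `∫_{Gᶜ} |x - y|^{-n-sp} dy ≤ c d(x)^{-sp}`, with `c` the integral of
`|z|^{-n-sp}` outside the unit ball, finite because `sp > 0`. Splitting `ℝⁿ × ℝⁿ` along `G` and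
`Gᶜ`, the Gagliardo seminorm of `E₀f` is that of `f` on `G` plus twice the cross term
`∫_G |f(x)|^p ∫_{Gᶜ} |x - y|^{-n-sp} dy dx ≤ c ∫_G |f|^p d^{-sp}`; the `L^p` norms agree. -/

open Module Function

section HaarTail

variable {E : Type*} [NormedAddCommGroup E] [NormedSpace ℝ E] [FiniteDimensional ℝ E]

theorem IsOpen.infDist_frontier_eq_infDist_compl {G : Set E} (hG : IsOpen G) (hGu : G ≠ univ)
    {x : E} (hx : x ∈ G) : infDist x (frontier G) = infDist x Gᶜ := by
  obtain ⟨y, hy, hxy⟩ := exists_mem_frontier_infDist_compl_eq_dist hx hGu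
  refine le_antisymm (hxy ▸ infDist_le_dist_of_mem hy) ?_
  exact infDist_le_infDist_of_subset (hG.frontier_eq ▸ fun _ hz => hz.2) ⟨y, hy⟩

variable [MeasurableSpace E] [BorelSpace E] (μ : Measure E) [μ.IsAddHaarMeasure]

theorem lintegral_eq_mul_lintegral_comp_smul {F : E → ℝ≥0∞} (hF : Measurable F) {r : ℝ}
    (hr : 0 < r) : ∫⁻ z, F z ∂μ = ENNReal.ofReal (r ^ finrank ℝ E) * ∫⁻ w, F (r • w) ∂μ := by
  have hrd : 0 < r ^ finrank ℝ E := pow_pos hr _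
  rw [← lintegral_map hF (measurable_const_smul r), Measure.map_addHaar_smul μ hr.ne',
    lintegral_smul_measure, smul_eq_mul, ← mul_assoc, ← ENNReal.ofReal_mul hrd.le,
    abs_of_pos (inv_pos.2 hrd), mul_inv_cancel₀ hrd.ne', ENNReal.ofReal_one, one_mul]

theorem setLIntegral_compl_ball_norm_rpow_neg (α : ℝ) {r : ℝ} (hr : 0 < r) :
    ∫⁻ z in (ball (0 : E) r)ᶜ, ENNReal.ofReal (‖z‖ ^ (-α)) ∂μ =
      ENNReal.ofReal (r ^ ((finrank ℝ E : ℝ) - α)) *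
        ∫⁻ z in (ball (0 : E) 1)ᶜ, ENNReal.ofReal (‖z‖ ^ (-α)) ∂μ := by
  have hscale : ∀ w : E,
      (ball (0 : E) r)ᶜ.indicator (fun z => ENNReal.ofReal (‖z‖ ^ (-α))) (r • w) =
        ENNReal.ofReal (r ^ (-α)) *
          (ball (0 : E) 1)ᶜ.indicator (fun z => ENNReal.ofReal (‖z‖ ^ (-α))) w := by
    intro w
    have hnorm : ‖r • w‖ = r * ‖w‖ := by rw [norm_smul, Real.norm_of_nonneg hr.le]
    have hmem : r • w ∈ (ball (0 : E) r)ᶜ ↔ w ∈ (ball (0 : E) 1)ᶜ := by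
      simp only [mem_compl_iff, mem_ball_zero_iff, hnorm, not_iff_not]
      exact mul_lt_iff_lt_one_right hr
    by_cases hw : w ∈ (ball (0 : E) 1)ᶜ
    · rw [indicator_of_mem (hmem.2 hw), indicator_of_mem hw, hnorm,
        Real.mul_rpow hr.le (norm_nonneg w), ENNReal.ofReal_mul (Real.rpow_nonneg hr.le _)]
    · rw [indicator_of_notMem (mt hmem.1 hw), indicator_of_notMem hw, mul_zero]
  rw [← lintegral_indicator measurableSet_ball.compl, ← lintegral_indicator measurableSet_ball.compl,
    lintegral_eq_mul_lintegral_comp_smul μ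
      ((Measurable.indicator (by fun_prop) measurableSet_ball.compl)) hr, lintegral_congr hscale,
    lintegral_const_mul' _ _ ENNReal.ofReal_ne_top, ← mul_assoc,
    ← ENNReal.ofReal_mul (pow_pos hr _).le, ← Real.rpow_natCast, ← Real.rpow_add hr,
    sub_eq_add_neg]

theorem setLIntegral_compl_ball_norm_rpow_neg_lt_top {α : ℝ} (hα : (finrank ℝ E : ℝ) < α) :
    ∫⁻ z in (ball (0 : E) 1)ᶜ, ENNReal.ofReal (‖z‖ ^ (-α)) ∂μ < ∞ := by
  have hα0 : 0 ≤ α := (Nat.cast_nonneg _).trans hα.le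
  have hle : ∀ z ∈ (ball (0 : E) 1)ᶜ, ENNReal.ofReal (‖z‖ ^ (-α)) ≤
      ENNReal.ofReal (2 ^ α) * ENNReal.ofReal ((1 + ‖z‖) ^ (-α)) := by
    intro z hz
    have h1 : 1 ≤ ‖z‖ := by simpa using hz
    rw [← ENNReal.ofReal_mul (by positivity : (0 : ℝ) ≤ 2 ^ α)]
    refine ENNReal.ofReal_le_ofReal ?_
    calc ‖z‖ ^ (-α) = 2 ^ α * (2 * ‖z‖) ^ (-α) := by
          rw [Real.mul_rpow zero_le_two (norm_nonneg z), ← mul_assoc,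
            ← Real.rpow_add zero_lt_two, add_neg_cancel, Real.rpow_zero, one_mul]
      _ ≤ 2 ^ α * (1 + ‖z‖) ^ (-α) := by
          refine mul_le_mul_of_nonneg_left ?_ (by positivity)
          exact Real.rpow_le_rpow_of_nonpos (by positivity) (by linarith) (neg_nonpos.2 hα0)
  calc ∫⁻ z in (ball (0 : E) 1)ᶜ, ENNReal.ofReal (‖z‖ ^ (-α)) ∂μ
      ≤ ∫⁻ z in (ball (0 : E) 1)ᶜ, ENNReal.ofReal (2 ^ α) * ENNReal.ofReal ((1 + ‖z‖) ^ (-α)) ∂μ :=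
        setLIntegral_mono' measurableSet_ball.compl hle
    _ ≤ ∫⁻ z, ENNReal.ofReal (2 ^ α) * ENNReal.ofReal ((1 + ‖z‖) ^ (-α)) ∂μ :=
        setLIntegral_le_lintegral _ _
    _ < ∞ := by
        rw [lintegral_const_mul' _ _ ENNReal.ofReal_ne_top]
        exact ENNReal.mul_lt_top ENNReal.ofReal_lt_top (finite_integral_one_add_norm hα)

theorem setLIntegral_norm_sub_rpow_neg_le (α : ℝ) {s : Set E} {x : E} (hx : 0 < infDist x s) :
    ∫⁻ y in s, ENNReal.ofReal (‖x - y‖ ^ (-α)) ∂μ ≤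
      ENNReal.ofReal (infDist x s ^ ((finrank ℝ E : ℝ) - α)) *
        ∫⁻ z in (ball (0 : E) 1)ᶜ, ENNReal.ofReal (‖z‖ ^ (-α)) ∂μ := by
  set d := infDist x s
  have hsub : s ⊆ (ball x d)ᶜ := fun y hy hyd =>
    (infDist_le_dist_of_mem hy).not_gt (by rwa [mem_ball, dist_comm] at hyd)
  have htranslate : ∫⁻ y in (ball x d)ᶜ, ENNReal.ofReal (‖x - y‖ ^ (-α)) ∂μ =
      ∫⁻ z in (ball (0 : E) d)ᶜ, ENNReal.ofReal (‖z‖ ^ (-α)) ∂μ := by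
    rw [← lintegral_indicator measurableSet_ball.compl, ← lintegral_indicator measurableSet_ball.compl,
      ← lintegral_add_right_eq_self _ x]
    refine lintegral_congr fun y => ?_
    simp [indicator, dist_eq_norm]
  calc ∫⁻ y in s, ENNReal.ofReal (‖x - y‖ ^ (-α)) ∂μ
      ≤ ∫⁻ y in (ball x d)ᶜ, ENNReal.ofReal (‖x - y‖ ^ (-α)) ∂μ := lintegral_mono_set hsub
    _ = _ := by rw [htranslate, setLIntegral_compl_ball_norm_rpow_neg μ α hx]

theorem IsOpen.setLIntegral_compl_norm_sub_rpow_neg_le {G : Set E} (hG : IsOpen G)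
    (hGu : G ≠ univ) {x : E} (hx : x ∈ G) (α : ℝ) :
    ∫⁻ y in Gᶜ, ENNReal.ofReal (‖x - y‖ ^ (-α)) ∂μ ≤
      ENNReal.ofReal (infDist x (frontier G)) ^ ((finrank ℝ E : ℝ) - α) *
        ∫⁻ z in (ball (0 : E) 1)ᶜ, ENNReal.ofReal (‖z‖ ^ (-α)) ∂μ := by
  have hd : 0 < infDist x Gᶜ :=
    (hG.isClosed_compl.notMem_iff_infDist_pos (nonempty_compl.2 hGu)).1 (· hx)
  rw [hG.infDist_frontier_eq_infDist_compl hGu hx, ENNReal.ofReal_rpow_of_pos hd]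
  exact setLIntegral_norm_sub_rpow_neg_le μ α hd

end HaarTail

theorem lintegral_lintegral_eq_of_symm {α : Type*} [MeasurableSpace α] {μ : Measure α} [SFinite μ]
    {K : α → α → ℝ≥0∞} (hK : Measurable (uncurry K)) (hsymm : ∀ x y, K x y = K y x)
    {s : Set α} (hs : MeasurableSet s) :
    ∫⁻ x, ∫⁻ y, K x y ∂μ ∂μ =
      ∫⁻ x in s, ∫⁻ y in s, K x y ∂μ ∂μ + 2 * ∫⁻ x in s, ∫⁻ y in sᶜ, K x y ∂μ ∂μ +
        ∫⁻ x in sᶜ, ∫⁻ y in sᶜ, K x y ∂μ ∂μ := by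
  have hswap : ∫⁻ x in sᶜ, ∫⁻ y in s, K x y ∂μ ∂μ = ∫⁻ x in s, ∫⁻ y in sᶜ, K x y ∂μ ∂μ := by
    rw [lintegral_lintegral_swap hK.aemeasurable]
    simp_rw [hsymm]
  calc ∫⁻ x, ∫⁻ y, K x y ∂μ ∂μ
      = ∫⁻ x, (∫⁻ y in s, K x y ∂μ + ∫⁻ y in sᶜ, K x y ∂μ) ∂μ := by
        simp_rw [lintegral_add_compl _ hs]
    _ = ∫⁻ x, ∫⁻ y in s, K x y ∂μ ∂μ + ∫⁻ x, ∫⁻ y in sᶜ, K x y ∂μ ∂μ :=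
        lintegral_add_left hK.lintegral_prod_right _
    _ = _ := by
        rw [← lintegral_add_compl _ hs, ← lintegral_add_compl (fun x => ∫⁻ y in sᶜ, K x y ∂μ) hs,
          hswap]
        ring

section ZeroExtension

variable {n : ℕ} {s p : ℝ} {G : Set (EuclideanSpace ℝ (Fin n))}
  {f : EuclideanSpace ℝ (Fin n) → ℝ}

def hardyInt (n : ℕ) (s p : ℝ) (G : Set (EuclideanSpace ℝ (Fin n)))
    (f : EuclideanSpace ℝ (Fin n) → ℝ) : ℝ≥0∞ :=
  ∫⁻ x in G, ENNReal.ofReal (|f x| ^ p) * ENNReal.ofReal (infDist x (frontier G)) ^ (-(s * p))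

theorem lpInt_univ_indicator (hp : p ≠ 0) (hG : MeasurableSet G) :
    lpInt n p univ (G.indicator f) = lpInt n p G f := by
  unfold lpInt
  rw [Measure.restrict_univ, ← lintegral_indicator hG]
  refine lintegral_congr fun x => ?_
  by_cases hx : x ∈ G <;> simp [hx, Real.zero_rpow hp]

theorem gagliardo_univ_indicator (hp : p ≠ 0) (hG : MeasurableSet G) (hf : Measurable f) :
    gagliardo n s p univ (G.indicator f) = gagliardo n s p G f +
      2 * ∫⁻ x in G, ENNReal.ofReal (|f x| ^ p) *
        ∫⁻ y in Gᶜ, ENNReal.ofReal (‖x - y‖ ^ (-((n : ℝ) + s * p))) := by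
  set K : EuclideanSpace ℝ (Fin n) → EuclideanSpace ℝ (Fin n) → ℝ≥0∞ := fun x y =>
    ENNReal.ofReal (|G.indicator f x - G.indicator f y| ^ p / ‖x - y‖ ^ ((n : ℝ) + s * p))
  have hfG : Measurable (G.indicator f) := hf.indicator hG
  have hK : Measurable (uncurry K) := by unfold K uncurry; fun_prop
  have hsymm : ∀ x y, K x y = K y x := fun x y => by simp only [K, abs_sub_comm, norm_sub_rev]
  have hGG : ∫⁻ x in G, ∫⁻ y in G, K x y = gagliardo n s p G f :=
    setLIntegral_congr_fun hG fun x hx =>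
      setLIntegral_congr_fun hG fun y hy => by simp [K, indicator_of_mem hx, indicator_of_mem hy]
  have hGGc : ∫⁻ x in G, ∫⁻ y in Gᶜ, K x y = ∫⁻ x in G, ENNReal.ofReal (|f x| ^ p) *
      ∫⁻ y in Gᶜ, ENNReal.ofReal (‖x - y‖ ^ (-((n : ℝ) + s * p))) :=
    setLIntegral_congr_fun hG fun x hx => by
      rw [← lintegral_const_mul' _ _ ENNReal.ofReal_ne_top]
      refine setLIntegral_congr_fun hG.compl fun y hy => ?_
      simp only [K, indicator_of_mem hx, indicator_of_notMem hy, sub_zero, div_eq_mul_inv,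
        ← Real.rpow_neg (norm_nonneg _), ENNReal.ofReal_mul (by positivity : 0 ≤ |f x| ^ p)]
  have hGcGc : ∫⁻ x in Gᶜ, ∫⁻ y in Gᶜ, K x y = 0 := by
    have hzero : ∀ x ∈ Gᶜ, ∀ y ∈ Gᶜ, K x y = 0 := fun x hx y hy => by
      simp [K, indicator_of_notMem hx, indicator_of_notMem hy, Real.zero_rpow hp]
    rw [setLIntegral_congr_fun hG.compl fun x hx =>
      setLIntegral_congr_fun hG.compl fun y hy => hzero x hx y hy]
    simp
  rw [gagliardo, Measure.restrict_univ]
  change ∫⁻ x, ∫⁻ y, K x y = _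
  rw [lintegral_lintegral_eq_of_symm hK hsymm hG, hGG, hGGc, hGcGc, add_zero]

theorem gagliardo_univ_indicator_le (hp : p ≠ 0) (hGo : IsOpen G) (hGu : G ≠ univ)
    (hf : Measurable f) :
    gagliardo n s p univ (G.indicator f) ≤ gagliardo n s p G f +
      2 * (∫⁻ z in (ball (0 : EuclideanSpace ℝ (Fin n)) 1)ᶜ,
        ENNReal.ofReal (‖z‖ ^ (-((n : ℝ) + s * p)))) * hardyInt n s p G f := by
  have htail : ∀ x ∈ G, ∫⁻ y in Gᶜ, ENNReal.ofReal (‖x - y‖ ^ (-((n : ℝ) + s * p))) ≤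
      ENNReal.ofReal (infDist x (frontier G)) ^ (-(s * p)) *
        ∫⁻ z in (ball (0 : EuclideanSpace ℝ (Fin n)) 1)ᶜ,
          ENNReal.ofReal (‖z‖ ^ (-((n : ℝ) + s * p))) := fun x hx => by
    have h := hGo.setLIntegral_compl_norm_sub_rpow_neg_le volume hGu hx ((n : ℝ) + s * p)
    rwa [finrank_euclideanSpace_fin, sub_add_cancel_left] at h
  have hmeas : Measurable fun x => ENNReal.ofReal (|f x| ^ p) *
      ENNReal.ofReal (infDist x (frontier G)) ^ (-(s * p)) := by
    have := (continuous_infDist_pt (frontier G)).measurable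
    fun_prop
  rw [gagliardo_univ_indicator hp hGo.measurableSet hf, mul_assoc, mul_comm _ (hardyInt _ _ _ _ _),
    hardyInt, ← lintegral_mul_const _ hmeas]
  gcongr _ + 2 * ?_
  refine setLIntegral_mono' hGo.measurableSet fun x hx => ?_
  rw [mul_assoc]
  gcongr
  exact htail x hx

theorem sobNorm_univ_indicator_le (hp : 1 ≤ p) (hGo : IsOpen G) (hGu : G ≠ univ)
    (hf : Measurable f) :
    sobNorm n s p univ (G.indicator f) ≤ sobNorm n s p G f +
      (2 * ∫⁻ z in (ball (0 : EuclideanSpace ℝ (Fin n)) 1)ᶜ,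
        ENNReal.ofReal (‖z‖ ^ (-((n : ℝ) + s * p)))) ^ (1 / p) * hardyInt n s p G f ^ (1 / p) := by
  have hp0 : 0 < p := zero_lt_one.trans_le hp
  have hexp0 : (0 : ℝ) ≤ 1 / p := by positivity
  have hexp1 : 1 / p ≤ 1 := (div_le_one hp0).2 hp
  rw [sobNorm, sobNorm, lpInt_univ_indicator hp0.ne' hGo.measurableSet, add_assoc,
    ← ENNReal.mul_rpow_of_nonneg _ _ hexp0]
  gcongr _ + ?_
  calc gagliardo n s p univ (G.indicator f) ^ (1 / p)
      ≤ (gagliardo n s p G f + _) ^ (1 / p) :=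
        ENNReal.rpow_le_rpow (gagliardo_univ_indicator_le hp0.ne' hGo hGu hf) hexp0
    _ ≤ _ := ENNReal.rpow_add_le_add_rpow _ _ hexp0 hexp1

end ZeroExtension

theorem stmt1_general (n : ℕ) (s p : ℝ) (hs0 : 0 < s) (hp : 1 < p) :
    ∃ C : ℝ, 0 < C ∧
      ∀ G : Set (EuclideanSpace ℝ (Fin n)), IsOpen G → IsConnected G → G ≠ Set.univ →
        ∀ f : EuclideanSpace ℝ (Fin n) → ℝ, Measurable f →
          lpInt n p G f < ⊤ → gagliardo n s p G f < ⊤ →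
          sobNorm n s p Set.univ (G.indicator f) ≤
            ENNReal.ofReal C *
              (sobNorm n s p G f +
                (∫⁻ x in G, ENNReal.ofReal (|f x| ^ p) *
                  (ENNReal.ofReal (infDist x (frontier G))) ^ (-(s * p))) ^ (1 / p)) := by
  have htail : ∫⁻ z in (ball (0 : EuclideanSpace ℝ (Fin n)) 1)ᶜ,
      ENNReal.ofReal (‖z‖ ^ (-((n : ℝ) + s * p))) < ∞ :=
    setLIntegral_compl_ball_norm_rpow_neg_lt_top volume
      (by rw [finrank_euclideanSpace_fin]; nlinarith)
  set B := (2 * ∫⁻ z in (ball (0 : EuclideanSpace ℝ (Fin n)) 1)ᶜ,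
    ENNReal.ofReal (‖z‖ ^ (-((n : ℝ) + s * p)))) ^ (1 / p)
  have hB : B ≠ ∞ := ENNReal.rpow_ne_top_of_nonneg (by positivity)
    (ENNReal.mul_ne_top ENNReal.ofNat_ne_top htail.ne)
  refine ⟨B.toReal + 1, by positivity, fun G hGo _ hGu f hf _ _ => ?_⟩
  rw [ENNReal.ofReal_add ENNReal.toReal_nonneg zero_le_one, ENNReal.ofReal_toReal hB,
    ENNReal.ofReal_one]
  calc sobNorm n s p univ (G.indicator f)
      ≤ sobNorm n s p G f + B * hardyInt n s p G f ^ (1 / p) :=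
        sobNorm_univ_indicator_le hp.le hGo hGu hf
    _ ≤ (B + 1) * (sobNorm n s p G f + hardyInt n s p G f ^ (1 / p)) := by
        rw [mul_add]
        gcongr
        · exact le_mul_of_one_le_left' le_add_self
        · exact le_self_add

theorem stmt1 (n : ℕ) (s p : ℝ) (hs0 : 0 < s) (hs1 : s < 1) (hp : 1 < p) :
    ∃ C : ℝ, 0 < C ∧
      ∀ G : Set (EuclideanSpace ℝ (Fin n)), IsOpen G → IsConnected G → G ≠ Set.univ →
        ∀ f : EuclideanSpace ℝ (Fin n) → ℝ, Measurable f →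
          lpInt n p G f < ⊤ → gagliardo n s p G f < ⊤ →
          sobNorm n s p Set.univ (G.indicator f) ≤
            ENNReal.ofReal C *
              (sobNorm n s p G f +
                (∫⁻ x in G, ENNReal.ofReal (|f x| ^ p) *
                  (ENNReal.ofReal (infDist x (frontier G))) ^ (-(s * p))) ^ (1 / p)) :=
  stmt1_general n s p hs0 hp
end
end

section
/- (Discrete Hardy inequality) Let 1 ≤ p < ∞, σ < 0, and let (a_j)_{j≥0} be a sequence of nonnegative reals. Then ∑_{j=0}^∞ 2^{σj} (∑_{i=0}^j a_i)^p ≤ c ∑_{j=0}^∞ 2^{σj} a_j^p, where c depends only on p and σ. -/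
/-!
Put `y = 2 ^ (σ / p) < 1`, so that `2 ^ (σ j) = y ^ (p j)` and
`y ^ j * ∑_{i ≤ j} a i = ∑_{i ≤ j} y ^ (j - i) * (y ^ i * a i)` is a convolution with the
summable kernel `y ^ k`. Weighted Hölder with the weights `y ^ (j - i)`, whose total mass is at
most `(1 - y)⁻¹`, bounds its `p`-th power by `(1 - y)⁻¹ ^ (p - 1) ∑_{i ≤ j} y ^ (j - i) (y ^ i a i) ^ p`,
and summing over `j` (a Cauchy product with the geometric series) gives the constant
`(1 - y)⁻¹ ^ p`.
-/

open Finset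
open scoped ENNReal

theorem Real.rpow_inner_le_weight_rpow_mul {ι : Type*} (s : Finset ι) {p : ℝ} (hp : 1 ≤ p)
    (w f : ι → ℝ) (hw : ∀ i, 0 ≤ w i) (hf : ∀ i, 0 ≤ f i) :
    (∑ i ∈ s, w i * f i) ^ p ≤ (∑ i ∈ s, w i) ^ (p - 1) * ∑ i ∈ s, w i * f i ^ p := by
  have hp0 : p ≠ 0 := (zero_lt_one.trans_le hp).ne'
  have hW : 0 ≤ ∑ i ∈ s, w i := sum_nonneg fun i _ => hw i
  have hT : 0 ≤ ∑ i ∈ s, w i * f i ^ p :=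
    sum_nonneg fun i _ => mul_nonneg (hw i) (rpow_nonneg (hf i) p)
  calc (∑ i ∈ s, w i * f i) ^ p
      ≤ ((∑ i ∈ s, w i) ^ (1 - p⁻¹) * (∑ i ∈ s, w i * f i ^ p) ^ p⁻¹) ^ p :=
        rpow_le_rpow (sum_nonneg fun i _ => mul_nonneg (hw i) (hf i))
          (inner_le_weight_mul_Lp_of_nonneg s hp w f hw hf) (by positivity)
    _ = (∑ i ∈ s, w i) ^ (p - 1) * ∑ i ∈ s, w i * f i ^ p := by
        rw [mul_rpow (by positivity) (by positivity), ← rpow_mul hW, ← rpow_mul hT,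
          inv_mul_cancel₀ hp0, rpow_one, sub_mul, one_mul, inv_mul_cancel₀ hp0]

theorem ENNReal.tsum_mul_tsum_eq_tsum_sum_range (f g : ℕ → ℝ≥0∞) :
    (∑' n, f n) * ∑' n, g n = ∑' n, ∑ k ∈ range (n + 1), f k * g (n - k) := by
  simp_rw [← Nat.sum_antidiagonal_eq_sum_range_succ fun k l => f k * g l,
    ← ENNReal.tsum_mul_right, ← ENNReal.tsum_mul_left]
  rw [← ENNReal.tsum_prod,
    ← HasAntidiagonal.sigmaAntidiagonalEquivProd.tsum_eq (fun x : ℕ × ℕ => f x.1 * g x.2),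
    ENNReal.tsum_sigma']
  congr 1 with n
  rw [← sum_finset_coe, ← tsum_fintype (L := .unconditional _)]
  rfl

theorem ENNReal.tsum_sum_range_pow_sub_mul (r : ℝ≥0∞) (f : ℕ → ℝ≥0∞) :
    ∑' j, ∑ i ∈ range (j + 1), r ^ (j - i) * f i = (1 - r)⁻¹ * ∑' i, f i := by
  rw [← ENNReal.tsum_geometric, mul_comm, tsum_mul_tsum_eq_tsum_sum_range]
  simp only [mul_comm]

section Geometric

variable {y : ℝ} (hy0 : 0 ≤ y) (hy1 : y < 1)
include hy0 hy1

theorem sum_range_pow_sub_le (j : ℕ) : ∑ i ∈ range (j + 1), y ^ (j - i) ≤ (1 - y)⁻¹ := by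
  have hreflect := sum_range_reflect (fun i => y ^ i) (j + 1)
  rw [add_tsub_cancel_right] at hreflect
  rw [hreflect, range_eq_Ico, inv_eq_one_div, ← pow_zero y]
  exact geom_sum_Ico_le_of_lt_one hy0 hy1

theorem rpow_sum_range_pow_sub_mul_le {p : ℝ} (hp : 1 ≤ p) (b : ℕ → ℝ) (hb : ∀ i, 0 ≤ b i)
    (j : ℕ) :
    (∑ i ∈ range (j + 1), y ^ (j - i) * b i) ^ p ≤
      (1 - y)⁻¹ ^ (p - 1) * ∑ i ∈ range (j + 1), y ^ (j - i) * b i ^ p := by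
  refine (Real.rpow_inner_le_weight_rpow_mul _ hp (fun i => y ^ (j - i)) b
    (fun i => pow_nonneg hy0 _) hb).trans ?_
  gcongr
  · exact sum_nonneg fun i _ => mul_nonneg (pow_nonneg hy0 _) (Real.rpow_nonneg (hb i) p)
  · exact sum_range_pow_sub_le hy0 hy1 j

theorem ofReal_rpow_pow_mul_sum_range_le {p : ℝ} (hp : 1 ≤ p) (a : ℕ → ℝ)
    (ha : ∀ i, 0 ≤ a i) (j : ℕ) :
    ENNReal.ofReal ((y ^ j * ∑ i ∈ range (j + 1), a i) ^ p) ≤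
      ENNReal.ofReal ((1 - y)⁻¹ ^ (p - 1)) *
        ∑ i ∈ range (j + 1), ENNReal.ofReal y ^ (j - i) * ENNReal.ofReal ((y ^ i * a i) ^ p) := by
  have hconv : y ^ j * ∑ i ∈ range (j + 1), a i =
      ∑ i ∈ range (j + 1), y ^ (j - i) * (y ^ i * a i) := by
    rw [mul_sum]
    refine sum_congr rfl fun i hi => ?_
    rw [← mul_assoc, ← pow_add, Nat.sub_add_cancel (Nat.lt_succ_iff.1 (mem_range.1 hi))]
  have hb (i : ℕ) : 0 ≤ y ^ i * a i := mul_nonneg (pow_nonneg hy0 i) (ha i)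
  rw [hconv]
  refine (ENNReal.ofReal_le_ofReal
    (rpow_sum_range_pow_sub_mul_le hy0 hy1 hp _ hb j)).trans_eq ?_
  rw [ENNReal.ofReal_mul (by positivity), ENNReal.ofReal_sum_of_nonneg fun i _ =>
    mul_nonneg (pow_nonneg hy0 _) (Real.rpow_nonneg (hb i) p)]
  refine congrArg _ (sum_congr rfl fun i _ => ?_)
  rw [ENNReal.ofReal_mul (pow_nonneg hy0 _), ENNReal.ofReal_pow hy0]

theorem tsum_ofReal_rpow_pow_mul_sum_range_le {p : ℝ} (hp : 1 ≤ p) (a : ℕ → ℝ)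
    (ha : ∀ i, 0 ≤ a i) :
    ∑' j, ENNReal.ofReal ((y ^ j * ∑ i ∈ range (j + 1), a i) ^ p) ≤
      ENNReal.ofReal ((1 - y)⁻¹ ^ p) * ∑' j, ENNReal.ofReal ((y ^ j * a j) ^ p) := by
  have hy : 0 < 1 - y := sub_pos.2 hy1
  calc ∑' j, ENNReal.ofReal ((y ^ j * ∑ i ∈ range (j + 1), a i) ^ p)
      ≤ ∑' j, ENNReal.ofReal ((1 - y)⁻¹ ^ (p - 1)) *
          ∑ i ∈ range (j + 1), ENNReal.ofReal y ^ (j - i) * ENNReal.ofReal ((y ^ i * a i) ^ p) :=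
        ENNReal.tsum_le_tsum (ofReal_rpow_pow_mul_sum_range_le hy0 hy1 hp a ha)
    _ = ENNReal.ofReal ((1 - y)⁻¹ ^ (p - 1)) *
          ((1 - ENNReal.ofReal y)⁻¹ * ∑' i, ENNReal.ofReal ((y ^ i * a i) ^ p)) := by
        rw [ENNReal.tsum_mul_left, ENNReal.tsum_sum_range_pow_sub_mul]
    _ = ENNReal.ofReal ((1 - y)⁻¹ ^ p) * ∑' j, ENNReal.ofReal ((y ^ j * a j) ^ p) := by
        rw [← mul_assoc, ← ENNReal.ofReal_one, ← ENNReal.ofReal_sub _ hy0,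
          ← ENNReal.ofReal_inv_of_pos hy, ← ENNReal.ofReal_mul (by positivity),
          Real.rpow_sub_one (inv_pos.2 hy).ne', div_mul_cancel₀ _ (inv_pos.2 hy).ne']

end Geometric

theorem stmt2 (p σ : ℝ) (hp : 1 ≤ p) (hσ : σ < 0) :
    ∃ c : ℝ, 0 < c ∧
      ∀ a : ℕ → ℝ, (∀ j, 0 ≤ a j) →
        ∑' j : ℕ, ENNReal.ofReal ((2 : ℝ) ^ (σ * j) * (∑ i ∈ Finset.range (j + 1), a i) ^ p)
          ≤ ENNReal.ofReal c * ∑' j : ℕ, ENNReal.ofReal ((2 : ℝ) ^ (σ * j) * a j ^ p) := by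
  set y : ℝ := 2 ^ (σ / p)
  have hy0 : 0 ≤ y := by positivity
  have hy1 : y < 1 :=
    Real.rpow_lt_one_of_one_lt_of_neg one_lt_two (div_neg_of_neg_of_pos hσ (by linarith))
  have hweight (n : ℕ) {x : ℝ} (hx : 0 ≤ x) : (y ^ n * x) ^ p = 2 ^ (σ * n) * x ^ p := by
    rw [Real.mul_rpow (pow_nonneg hy0 n) hx, ← Real.rpow_mul_natCast zero_le_two,
      ← Real.rpow_mul zero_le_two]
    congr 2
    field_simp
  refine ⟨(1 - y)⁻¹ ^ p, by have := sub_pos.2 hy1; positivity, fun a ha => ?_⟩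
  have hardy := tsum_ofReal_rpow_pow_mul_sum_range_le hy0 hy1 hp a ha
  simpa only [hweight _ (ha _), hweight _ (sum_nonneg fun i _ => ha i)] using hardy
end

section
/- Suppose G ⊂ ℝⁿ is a domain with compact boundary such that ℝⁿ \ G has Lebesgue measure zero, and assume n − sp ∈ 𝒜(∂G), i.e. there is C>0 with ∫_{B(x,r)} dist(y,∂G)^{−sp} dy ≤ C r^{n−sp} for all x ∈ ∂G and r > 0, where 1 ≤ p < ∞ and 0 < s < n/p. Then there is a constant C' such that for every x ∈ ℝⁿ and every r > 0, (⨍_{B(x,r)} dist(y,∂G)^{−sp} dy)^{1/p} ≤ C' ⨍_{B(x,r)} dist(y,∂G)^{−s} dy. -/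
/-!
Write `d = dist(·, F)` and `D = d(x)`. On `B(x, r)` we have `D - r ≤ d ≤ D + r`. If `2r ≤ D`, then
`D + r ≤ 3 (D - r)`, so `d` is comparable to the constant `D - r` on the ball and both averages are
controlled by powers of it. If `D < 2r`, then `B(x, r) ⊆ B(x₀, 3r)` for some `x₀ ∈ F`, so the Aikawa
bound on `B(x₀, 3r)` gives `⨍ d^{-sp} ≲ r^{-sp}`, while `d ≤ 3r` on `B(x, r)` gives
`⨍ d^{-s} ≥ (3r)^{-s}`.
-/

open MeasureTheory Metric Set
open scoped ENNReal

noncomputable section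

open Module

def distWeight {X : Type*} [PseudoMetricSpace X] (F : Set X) (t : ℝ) (y : X) : ℝ≥0∞ :=
  ENNReal.ofReal (infDist y F) ^ (-t)

/-- The paper's condition `n - q ∈ 𝒜(F)` with constant `C`, where `n = finrank ℝ E`. -/
def AikawaBound {E : Type*} [NormedAddCommGroup E] [NormedSpace ℝ E] [MeasurableSpace E]
    (μ : Measure E) (F : Set E) (q C : ℝ) : Prop :=
  ∀ x ∈ F, ∀ r : ℝ, 0 < r →
    ∫⁻ y in ball x r, distWeight F q y ∂μ ≤ ENNReal.ofReal (C * r ^ ((finrank ℝ E : ℝ) - q))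

/-- The Aikawa bound on `B(x₀, 3r)` divided by `μ (B(x, r)) = r ^ n * μ (B(0, 1))` is
`aikawaConst μ q C * r ^ (-q)`. -/
def aikawaConst {E : Type*} [NormedAddCommGroup E] [NormedSpace ℝ E] [MeasurableSpace E]
    (μ : Measure E) (q C : ℝ) : ℝ≥0∞ :=
  (μ (ball 0 1))⁻¹ * ENNReal.ofReal (C * 3 ^ ((finrank ℝ E : ℝ) - q))

namespace ENNReal

lemma rpow_neg_le_rpow_neg {a b : ℝ≥0∞} (hab : a ≤ b) {t : ℝ} (ht : 0 ≤ t) :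
    b ^ (-t) ≤ a ^ (-t) := by
  rw [rpow_neg, rpow_neg]
  exact ENNReal.inv_le_inv.2 (rpow_le_rpow hab ht)

lemma rpow_neg_mul_rpow_one_div (a : ℝ≥0∞) (s : ℝ) {p : ℝ} (hp : p ≠ 0) :
    (a ^ (-(s * p))) ^ (1 / p) = a ^ (-s) := by
  rw [← rpow_mul]
  congr 1
  field_simp

lemma rpow_neg_le_rpow_mul_of_mul_rpow_neg_le {c a b : ℝ≥0∞} (hc₀ : c ≠ 0) (hc : c ≠ ⊤)
    (ha : a ≠ ⊤) {t : ℝ} (h : (c * a) ^ (-t) ≤ b) : a ^ (-t) ≤ c ^ t * b :=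
  calc a ^ (-t) = c ^ (t + -t) * a ^ (-t) := by rw [add_neg_cancel, rpow_zero, one_mul]
    _ = c ^ t * (c * a) ^ (-t) := by
      rw [rpow_add _ _ hc₀ hc, mul_rpow_of_ne_top hc ha, mul_assoc]
    _ ≤ c ^ t * b := by gcongr

end ENNReal

section SetLAverage

variable {α : Type*} [MeasurableSpace α] {μ : Measure α} {s : Set α} {f : α → ℝ≥0∞} {c : ℝ≥0∞}

lemma setLAverage_le_of_forall_le (hs : MeasurableSet s) (h : ∀ y ∈ s, f y ≤ c) :
    ⨍⁻ y in s, f y ∂μ ≤ c := by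
  rw [setLAverage_eq]
  refine ENNReal.div_le_of_le_mul ?_
  rw [← setLIntegral_const]
  exact setLIntegral_mono' hs h

lemma le_setLAverage_of_forall_le (hs : MeasurableSet s) (h₀ : μ s ≠ 0) (hμ : μ s ≠ ⊤)
    (h : ∀ y ∈ s, c ≤ f y) : c ≤ ⨍⁻ y in s, f y ∂μ :=
  calc c = ⨍⁻ _ in s, c ∂μ := (setLAverage_const h₀ hμ c).symm
    _ ≤ ⨍⁻ y in s, f y ∂μ := laverage_mono_ae ((ae_restrict_mem hs).mono h)

end SetLAverage

section PseudoMetric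

variable {X : Type*} [PseudoMetricSpace X] {F : Set X} {x y : X} {r t : ℝ}

lemma infDist_le_add_of_mem_ball (hy : y ∈ ball x r) : infDist y F ≤ infDist x F + r := by
  have := infDist_le_infDist_add_dist (x := y) (y := x) (s := F)
  linarith [mem_ball.1 hy]

lemma sub_le_infDist_of_mem_ball (hy : y ∈ ball x r) : infDist x F - r ≤ infDist y F := by
  have := infDist_le_infDist_add_dist (x := x) (y := y) (s := F)
  linarith [mem_ball'.1 hy]

lemma distWeight_empty (ht : 0 < t) (y : X) : distWeight ∅ t y = ⊤ := by
  rw [distWeight, infDist_empty, ENNReal.ofReal_zero, ENNReal.zero_rpow_of_neg (neg_lt_zero.2 ht)]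

variable [MeasurableSpace X] [OpensMeasurableSpace X] {μ : Measure X}

lemma setLAverage_distWeight_ball_le (ht : 0 ≤ t) :
    ⨍⁻ y in ball x r, distWeight F t y ∂μ ≤ ENNReal.ofReal (infDist x F - r) ^ (-t) :=
  setLAverage_le_of_forall_le measurableSet_ball fun _ hy ↦
    ENNReal.rpow_neg_le_rpow_neg (ENNReal.ofReal_le_ofReal (sub_le_infDist_of_mem_ball hy)) ht

lemma rpow_neg_le_setLAverage_distWeight_ball (ht : 0 ≤ t) (h₀ : μ (ball x r) ≠ 0)
    (hμ : μ (ball x r) ≠ ⊤) {R : ℝ} (hR : infDist x F + r ≤ R) :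
    ENNReal.ofReal R ^ (-t) ≤ ⨍⁻ y in ball x r, distWeight F t y ∂μ :=
  le_setLAverage_of_forall_le measurableSet_ball h₀ hμ fun _ hy ↦
    ENNReal.rpow_neg_le_rpow_neg
      (ENNReal.ofReal_le_ofReal ((infDist_le_add_of_mem_ball hy).trans hR)) ht

lemma reverseHolder_distWeight_of_two_mul_le_infDist {s p : ℝ} (hp : 0 < p) (hs : 0 ≤ s)
    (h₀ : μ (ball x r) ≠ 0) (hμ : μ (ball x r) ≠ ⊤) (hx : 2 * r ≤ infDist x F) :
    (⨍⁻ y in ball x r, distWeight F (s * p) y ∂μ) ^ (1 / p) ≤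
      3 ^ s * ⨍⁻ y in ball x r, distWeight F s y ∂μ :=
  calc (⨍⁻ y in ball x r, distWeight F (s * p) y ∂μ) ^ (1 / p)
      ≤ (ENNReal.ofReal (infDist x F - r) ^ (-(s * p))) ^ (1 / p) := by
        gcongr
        exact setLAverage_distWeight_ball_le (by positivity)
    _ = ENNReal.ofReal (infDist x F - r) ^ (-s) :=
        ENNReal.rpow_neg_mul_rpow_one_div _ _ hp.ne'
    _ ≤ 3 ^ s * ⨍⁻ y in ball x r, distWeight F s y ∂μ := by
        refine ENNReal.rpow_neg_le_rpow_mul_of_mul_rpow_neg_le (by norm_num) (by norm_num)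
          ENNReal.ofReal_ne_top ?_
        rw [← ENNReal.ofReal_ofNat, ← ENNReal.ofReal_mul (by norm_num)]
        exact rpow_neg_le_setLAverage_distWeight_ball hs h₀ hμ (by linarith)

end PseudoMetric

section AddHaar

variable {E : Type*} [NormedAddCommGroup E] [NormedSpace ℝ E] [FiniteDimensional ℝ E]
  [MeasurableSpace E] [BorelSpace E] {μ : Measure E} [μ.IsAddHaarMeasure]
  {F : Set E} {q C : ℝ}

lemma setLAverage_distWeight_ball_le_of_aikawaBound (hA : AikawaBound μ F q C) {x₀ x : E}
    {r : ℝ} (hr : 0 < r) (hx₀ : x₀ ∈ F) (hx : dist x x₀ < 2 * r) :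
    ⨍⁻ y in ball x r, distWeight F q y ∂μ ≤
      aikawaConst μ q C * ENNReal.ofReal r ^ (-q) := by
  set R := ENNReal.ofReal r
  set Rn := R ^ (finrank ℝ E : ℝ)
  have hR₀ : R ≠ 0 := (ENNReal.ofReal_pos.2 hr).ne'
  have hRn₀ : Rn ≠ 0 := (ENNReal.rpow_pos (ENNReal.ofReal_pos.2 hr) ENNReal.ofReal_ne_top).ne'
  have hRn : Rn ≠ ⊤ := ENNReal.rpow_ne_top_of_nonneg (by positivity) ENNReal.ofReal_ne_top
  have hball : μ (ball x r) = Rn * μ (ball 0 1) := by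
    rw [Measure.addHaar_ball_of_pos μ x hr, ENNReal.ofReal_pow hr.le, ← ENNReal.rpow_natCast]
  have hsub : ball x r ⊆ ball x₀ (3 * r) := fun y hy ↦
    mem_ball.2 (by linarith [mem_ball.1 hy, dist_triangle y x x₀])
  have hint : ∫⁻ y in ball x r, distWeight F q y ∂μ ≤
      ENNReal.ofReal (C * 3 ^ ((finrank ℝ E : ℝ) - q)) * (Rn * R ^ (-q)) := by
    calc ∫⁻ y in ball x r, distWeight F q y ∂μ
        ≤ ∫⁻ y in ball x₀ (3 * r), distWeight F q y ∂μ := lintegral_mono_set hsub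
      _ ≤ ENNReal.ofReal (C * (3 * r) ^ ((finrank ℝ E : ℝ) - q)) := hA x₀ hx₀ _ (by positivity)
      _ = _ := by
        rw [Real.mul_rpow (by norm_num) hr.le, ← mul_assoc,
          ENNReal.ofReal_mul' (by positivity), ← ENNReal.ofReal_rpow_of_pos hr,
          ← ENNReal.rpow_add _ _ hR₀ ENNReal.ofReal_ne_top, sub_eq_add_neg]
  rw [setLAverage_eq, hball, ENNReal.div_eq_inv_mul, ENNReal.mul_inv (.inl hRn₀) (.inl hRn)]
  calc (Rn⁻¹ * (μ (ball 0 1))⁻¹) * ∫⁻ y in ball x r, distWeight F q y ∂μ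
      ≤ (Rn⁻¹ * (μ (ball 0 1))⁻¹) *
        (ENNReal.ofReal (C * 3 ^ ((finrank ℝ E : ℝ) - q)) * (Rn * R ^ (-q))) := by gcongr
    _ = aikawaConst μ q C * R ^ (-q) * (Rn⁻¹ * Rn) := by rw [aikawaConst]; ring
    _ = _ := by rw [ENNReal.inv_mul_cancel hRn₀ hRn, mul_one]

lemma reverseHolder_distWeight_of_aikawaBound_of_dist_lt {s p : ℝ}
    (hA : AikawaBound μ F (s * p) C) (hp : 0 < p) (hs : 0 ≤ s) {x₀ x : E} {r : ℝ} (hr : 0 < r)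
    (hx₀ : x₀ ∈ F) (hx : dist x x₀ < 2 * r) :
    (⨍⁻ y in ball x r, distWeight F (s * p) y ∂μ) ^ (1 / p) ≤
      3 ^ s * aikawaConst μ (s * p) C ^ (1 / p) * ⨍⁻ y in ball x r, distWeight F s y ∂μ :=
  calc (⨍⁻ y in ball x r, distWeight F (s * p) y ∂μ) ^ (1 / p)
      ≤ (aikawaConst μ (s * p) C * ENNReal.ofReal r ^ (-(s * p))) ^ (1 / p) := by
        gcongr
        exact setLAverage_distWeight_ball_le_of_aikawaBound hA hr hx₀ hx
    _ = aikawaConst μ (s * p) C ^ (1 / p) * ENNReal.ofReal r ^ (-s) := by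
        rw [ENNReal.mul_rpow_of_nonneg _ _ (by positivity),
          ENNReal.rpow_neg_mul_rpow_one_div _ _ hp.ne']
    _ ≤ aikawaConst μ (s * p) C ^ (1 / p) *
          (3 ^ s * ⨍⁻ y in ball x r, distWeight F s y ∂μ) := by
        gcongr
        refine ENNReal.rpow_neg_le_rpow_mul_of_mul_rpow_neg_le (by norm_num) (by norm_num)
          ENNReal.ofReal_ne_top ?_
        rw [← ENNReal.ofReal_ofNat, ← ENNReal.ofReal_mul (by norm_num)]
        exact rpow_neg_le_setLAverage_distWeight_ball hs (measure_ball_pos μ x hr).ne'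
          measure_ball_lt_top.ne (by linarith [infDist_le_dist_of_mem (x := x) hx₀])
    _ = _ := by ring

theorem exists_reverseHolder_distWeight_of_aikawaBound {s p : ℝ}
    (hA : AikawaBound μ F (s * p) C) (hp : 0 < p) (hs : 0 < s) :
    ∃ K : ℝ≥0∞, K ≠ 0 ∧ K ≠ ⊤ ∧ ∀ (x : E) (r : ℝ), 0 < r →
      (⨍⁻ y in ball x r, distWeight F (s * p) y ∂μ) ^ (1 / p) ≤
        K * ⨍⁻ y in ball x r, distWeight F s y ∂μ := by
  set K₀ := aikawaConst μ (s * p) C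
  have hK₀ : K₀ ≠ ⊤ := ENNReal.mul_ne_top
    (ENNReal.inv_ne_top.2 (measure_ball_pos μ 0 one_pos).ne') ENNReal.ofReal_ne_top
  have hK : 3 ^ s * max 1 (K₀ ^ (1 / p)) ≠ 0 :=
    mul_ne_zero (by positivity) (one_pos.trans_le (le_max_left _ _)).ne'
  refine ⟨_, hK, ?_, fun x r hr ↦ ?_⟩
  · exact ENNReal.mul_ne_top (ENNReal.rpow_ne_top_of_nonneg hs.le (by norm_num))
      (max_lt ENNReal.one_lt_top (ENNReal.rpow_lt_top_of_nonneg (by positivity) hK₀)).ne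
  have h₀ : μ (ball x r) ≠ 0 := (measure_ball_pos μ x hr).ne'
  have hμ : μ (ball x r) ≠ ⊤ := measure_ball_lt_top.ne
  rcases F.eq_empty_or_nonempty with rfl | hF
  · simp only [distWeight_empty hs, setLAverage_const h₀ hμ, ENNReal.mul_top hK, le_top]
  rcases lt_or_ge (infDist x F) (2 * r) with hnear | hfar
  · obtain ⟨x₀, hx₀, hx⟩ := (infDist_lt_iff hF).1 hnear
    calc _ ≤ 3 ^ s * K₀ ^ (1 / p) * ⨍⁻ y in ball x r, distWeight F s y ∂μ :=
          reverseHolder_distWeight_of_aikawaBound_of_dist_lt hA hp hs.le hr hx₀ hx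
      _ ≤ _ := by gcongr; exact le_max_right _ _
  · calc _ ≤ 3 ^ s * 1 * ⨍⁻ y in ball x r, distWeight F s y ∂μ := by
          rw [mul_one]
          exact reverseHolder_distWeight_of_two_mul_le_infDist hp hs.le h₀ hμ hfar
      _ ≤ _ := by gcongr; exact le_max_left _ _

end AddHaar

theorem stmt5_general (n : ℕ) (s p : ℝ) (hp : 1 ≤ p) (hs : 0 < s)
    (G : Set (EuclideanSpace ℝ (Fin n)))
    (C : ℝ)
    (h : ∀ x ∈ frontier G, ∀ r : ℝ, 0 < r →
      ∫⁻ y in ball x r, (ENNReal.ofReal (infDist y (frontier G))) ^ (-(s * p)) ≤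
        ENNReal.ofReal (C * r ^ ((n : ℝ) - s * p))) :
    ∃ C' : ℝ, 0 < C' ∧ ∀ (x : EuclideanSpace ℝ (Fin n)) (r : ℝ), 0 < r →
      ((volume (ball x r))⁻¹ *
          ∫⁻ y in ball x r, (ENNReal.ofReal (infDist y (frontier G))) ^ (-(s * p))) ^ (1 / p)
        ≤ ENNReal.ofReal C' *
          ((volume (ball x r))⁻¹ *
            ∫⁻ y in ball x r, (ENNReal.ofReal (infDist y (frontier G))) ^ (-s)) := by
  have hA : AikawaBound volume (frontier G) (s * p) C := by
    rwa [AikawaBound, finrank_euclideanSpace_fin]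
  obtain ⟨K, hK₀, hK, hRH⟩ := exists_reverseHolder_distWeight_of_aikawaBound hA (by linarith) hs
  refine ⟨K.toReal, ENNReal.toReal_pos hK₀ hK, fun x r hr ↦ ?_⟩
  simpa only [ENNReal.ofReal_toReal hK, setLAverage_eq, ENNReal.div_eq_inv_mul, distWeight]
    using hRH x r hr

theorem stmt5 (n : ℕ) (s p : ℝ) (hp : 1 ≤ p) (hs : 0 < s) (hsn : s < n / p)
    (G : Set (EuclideanSpace ℝ (Fin n))) (hGo : IsOpen G) (hGc : IsConnected G)
    (hfr : IsCompact (frontier G)) (hnull : volume Gᶜ = 0)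
    (C : ℝ) (hC : 0 < C)
    (h : ∀ x ∈ frontier G, ∀ r : ℝ, 0 < r →
      ∫⁻ y in ball x r, (ENNReal.ofReal (infDist y (frontier G))) ^ (-(s * p)) ≤
        ENNReal.ofReal (C * r ^ ((n : ℝ) - s * p))) :
    ∃ C' : ℝ, 0 < C' ∧ ∀ (x : EuclideanSpace ℝ (Fin n)) (r : ℝ), 0 < r →
      ((volume (ball x r))⁻¹ *
          ∫⁻ y in ball x r, (ENNReal.ofReal (infDist y (frontier G))) ^ (-(s * p))) ^ (1 / p)
        ≤ ENNReal.ofReal C' *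
          ((volume (ball x r))⁻¹ *
            ∫⁻ y in ball x r, (ENNReal.ofReal (infDist y (frontier G))) ^ (-s)) :=
  stmt5_general n s p hp hs G C h
end
end

section
/- Let S ⊂ ℝⁿ be a set whose Aikawa dimension is strictly less than n, i.e. there exist t < n and C > 0 with ∫_{B(x,r)} dist(y,S)^{t−n} dy ≤ C r^t for all x ∈ S and 0 < r ≤ 1. Then S is porous: there exists κ ≥ 1 such that for every cube Q(x,r) with 0 < r ≤ 1 there is y ∈ Q(x,r) with Q(y, r/κ) ∩ S = ∅. -/
/-!
If `Q(y, r/κ)` meets `S` for every `y ∈ Q(x, r)`, take `s ∈ S ∩ Q(x, r/κ)`. Then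
`dist(·, S) ≤ √n r/κ` on `B(s, r/2) ⊆ Q(x, r)`, and since `t - n < 0` the Aikawa integral over
`B(s, r)` is at least `|B(s, r/2)| (√n r/κ)^(t-n) ≈ κ^(n-t) r^t`. This exceeds `C r^t` once `κ` is
large, because `n - t > 0`.
-/

open MeasureTheory Metric Set
open scoped ENNReal

noncomputable section

/-- The closed axis-parallel cube with center `c` and half side length `r`. -/
def cube (n : ℕ) (c : EuclideanSpace ℝ (Fin n)) (r : ℝ) : Set (EuclideanSpace ℝ (Fin n)) :=
  {y | ∀ i, |y i - c i| ≤ r}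

theorem ENNReal.rpow_le_rpow_of_nonpos {x y : ℝ≥0∞} {z : ℝ} (hz : z ≤ 0) (hxy : x ≤ y) :
    y ^ z ≤ x ^ z := by
  simpa only [ENNReal.rpow_neg, neg_neg, inv_inv] using
    ENNReal.inv_le_inv.2 (ENNReal.rpow_le_rpow hxy (neg_nonneg.2 hz))

theorem measure_mul_ofReal_rpow_le_setLIntegral {α : Type*} [MeasurableSpace α] (μ : Measure α)
    {f : α → ℝ} {A U : Set α} {δ p : ℝ} (hA : MeasurableSet A) (hAU : A ⊆ U) (hp : p ≤ 0)
    (hf : ∀ y ∈ A, f y ≤ δ) :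
    μ A * ENNReal.ofReal δ ^ p ≤ ∫⁻ y in U, ENNReal.ofReal (f y) ^ p ∂μ :=
  calc μ A * ENNReal.ofReal δ ^ p = ∫⁻ _ in A, ENNReal.ofReal δ ^ p ∂μ := by
        rw [setLIntegral_const, mul_comm]
    _ ≤ ∫⁻ y in A, ENNReal.ofReal (f y) ^ p ∂μ := setLIntegral_mono' hA fun y hy =>
        ENNReal.rpow_le_rpow_of_nonpos hp (ENNReal.ofReal_le_ofReal (hf y hy))
    _ ≤ ∫⁻ y in U, ENNReal.ofReal (f y) ^ p ∂μ := lintegral_mono_set hAU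

section Cube

variable {n : ℕ}

theorem self_mem_cube (c : EuclideanSpace ℝ (Fin n)) {r : ℝ} (hr : 0 ≤ r) : c ∈ cube n c r :=
  fun i => by simpa using hr

theorem cube_subset_cube {x c : EuclideanSpace ℝ (Fin n)} {a b r : ℝ} (hc : c ∈ cube n x a)
    (hr : a + b ≤ r) : cube n c b ⊆ cube n x r := fun y hy i =>
  calc |y i - x i| ≤ |y i - c i| + |c i - x i| := abs_sub_le _ _ _
    _ ≤ r := by linarith [hy i, hc i]

theorem ball_subset_cube (c : EuclideanSpace ℝ (Fin n)) (r : ℝ) : ball c r ⊆ cube n c r :=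
  fun y hy i => by
    simpa [Real.dist_eq] using ((PiLp.dist_apply_le y c i).trans_lt (mem_ball.1 hy)).le

theorem cube_subset_closedBall (c : EuclideanSpace ℝ (Fin n)) {r : ℝ} (hr : 0 ≤ r) :
    cube n c r ⊆ closedBall c (√n * r) := fun y hy => by
  rw [mem_closedBall, EuclideanSpace.dist_eq, ← Real.sqrt_sq hr,
    ← Real.sqrt_mul (Nat.cast_nonneg n)]
  refine Real.sqrt_le_sqrt ?_
  calc ∑ i, dist (y i) (c i) ^ 2 ≤ ∑ _i : Fin n, r ^ 2 := Finset.sum_le_sum fun i _ => by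
        rw [Real.dist_eq]
        exact pow_le_pow_left₀ (abs_nonneg _) (hy i) 2
    _ = n * r ^ 2 := by simp

end Cube

theorem rpow_le_of_volume_ball_mul_rpow_le {n : ℕ} {t C r K κ : ℝ} (hr : 0 < r) (hK : 0 < K)
    (hκ : 0 < κ) {x : EuclideanSpace ℝ (Fin n)}
    (h : volume (ball x (r / 2)) * ENNReal.ofReal (K * (r / κ)) ^ (t - n) ≤
      ENNReal.ofReal (C * r ^ t)) :
    κ ^ (n - t) ≤
      C * 2 ^ n * K ^ (n - t) / (volume (ball (0 : EuclideanSpace ℝ (Fin n)) 1)).toReal := by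
  set b := (volume (ball (0 : EuclideanSpace ℝ (Fin n)) 1)).toReal
  have hb : 0 < b :=
    ENNReal.toReal_pos (measure_ball_pos volume _ one_pos).ne' measure_ball_lt_top.ne
  rw [Measure.addHaar_ball_of_pos volume x (by positivity), finrank_euclideanSpace_fin,
    ← ENNReal.ofReal_toReal (measure_ball_lt_top (x := (0 : EuclideanSpace ℝ (Fin n)))).ne,
    ← ENNReal.ofReal_mul (by positivity), ENNReal.ofReal_rpow_of_pos (by positivity),
    ← ENNReal.ofReal_mul (by positivity), ENNReal.ofReal_le_ofReal_iff'] at h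
  have hscale : (r / 2) ^ n * (K * (r / κ)) ^ (t - n) =
      κ ^ (n - t) / (2 ^ n * K ^ (n - t)) * r ^ t := by
    rw [Real.mul_rpow hK.le (by positivity), Real.div_rpow hr.le hκ.le, Real.rpow_sub hr,
      Real.rpow_natCast, show t - n = -(n - t) by ring, Real.rpow_neg hK.le, Real.rpow_neg hκ.le,
      div_pow]
    field_simp
  have hpos : 0 < (r / 2) ^ n * b * (K * (r / κ)) ^ (t - n) := by positivity
  have hle : b * (κ ^ (n - t) / (2 ^ n * K ^ (n - t))) * r ^ t ≤ C * r ^ t := by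
    rw [mul_assoc, ← hscale]
    linarith [h.resolve_right hpos.not_ge]
  have hκle := le_of_mul_le_mul_right hle (by positivity)
  rw [mul_div_assoc', div_le_iff₀ (by positivity)] at hκle
  rw [le_div_iff₀ hb]
  linear_combination hκle

theorem stmt15_general (n : ℕ) (S : Set (EuclideanSpace ℝ (Fin n))) (t C : ℝ)
    (htn : t < n)
    (h : ∀ x ∈ S, ∀ r : ℝ, 0 < r → r ≤ 1 →
      ∫⁻ y in ball x r, (ENNReal.ofReal (infDist y S)) ^ (t - (n : ℝ)) ≤
        ENNReal.ofReal (C * r ^ t)) :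
    ∃ κ : ℝ, 1 ≤ κ ∧ ∀ (x : EuclideanSpace ℝ (Fin n)) (r : ℝ), 0 < r → r ≤ 1 →
      ∃ y ∈ cube n x r, cube n y (r / κ) ∩ S = ∅ := by
  -- `+ 1` keeps the distance bound positive in dimension `0`
  set K : ℝ := √n + 1
  obtain ⟨κ, hκ, hκ2⟩ := (((tendsto_rpow_atTop (sub_pos.2 htn)).eventually_gt_atTop
    (C * 2 ^ n * K ^ (n - t) / (volume (ball (0 : EuclideanSpace ℝ (Fin n)) 1)).toReal)).and
    (Filter.eventually_ge_atTop 2)).exists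
  refine ⟨κ, by linarith, fun x r hr hr1 => ?_⟩
  by_contra! hdense
  obtain ⟨s, hsx, hsS⟩ := hdense x (self_mem_cube x hr.le)
  have hδ : ∀ y ∈ ball s (r / 2), infDist y S ≤ K * (r / κ) := fun y hy => by
    have hyx : y ∈ cube n x r := cube_subset_cube hsx
      (by linarith [div_le_div_of_nonneg_left hr.le two_pos hκ2]) (ball_subset_cube s _ hy)
    obtain ⟨z, hzy, hzS⟩ := hdense y hyx
    have hz := mem_closedBall'.1 (cube_subset_closedBall y (by positivity) hzy)
    calc infDist y S ≤ dist y z := infDist_le_dist_of_mem hzS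
      _ ≤ K * (r / κ) := by linarith [show 0 < r / κ by positivity]
  have hlower := (measure_mul_ofReal_rpow_le_setLIntegral volume measurableSet_ball
    (ball_subset_ball (half_le_self hr.le)) (by linarith) hδ).trans (h s hsS r hr hr1)
  exact hκ.not_ge (rpow_le_of_volume_ball_mul_rpow_le hr (by positivity) (by linarith) hlower)

theorem stmt15 (n : ℕ) (S : Set (EuclideanSpace ℝ (Fin n))) (t C : ℝ)
    (htn : t < n) (hC : 0 < C)
    (h : ∀ x ∈ S, ∀ r : ℝ, 0 < r → r ≤ 1 →
      ∫⁻ y in ball x r, (ENNReal.ofReal (infDist y S)) ^ (t - (n : ℝ)) ≤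
        ENNReal.ofReal (C * r ^ t)) :
    ∃ κ : ℝ, 1 ≤ κ ∧ ∀ (x : EuclideanSpace ℝ (Fin n)) (r : ℝ), 0 < r → r ≤ 1 →
      ∃ y ∈ cube n x r, cube n y (r / κ) ∩ S = ∅ :=
  stmt15_general n S t C htn h
end
end

section
/- Let σ' < 0 and τ ∈ ℕ, 1 < p < ∞. Suppose (b_R)_{R} are nonnegative numbers indexed by a countable family, organized by levels j ∈ ℤ, and (a_Q) nonnegative numbers at levels k, with a 'chain' relation such that each Q at level k determines at most 2^τ elements R ∈ 𝒞(Q) at each level j ≤ k+τ, and for each R at level j the shadow satisfies ∑_{k≥j−τ} ∑_{Q ∈ 𝒮(R), level k} 2^{(j−k)(n−sp)}(τ+1+k−j)^p ≤ σ. Then ∑_Q 2^{−k_Q(n−sp)} (∑_{R∈𝒞(Q)} b_R)^p ≤ C(σ,τ,p) ∑_R 2^{−j_R(n−sp)} b_R^p. -/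
/-!
Write `b_R = w_R⁻¹ (w_R b_R)` with the weight `w_R = τ + 1 + k_Q - j_R ≥ 1` and apply Hölder on
each chain. The dual factor `∑_{R ∈ 𝒞(Q)} w_R^{-q}` is at most `2^τ ∑_{m ≥ 0} (m + 1)^{-q}`,
because a chain has at most `2^τ` elements at each distance `m` below its top level `k_Q + τ`,
and the series converges since `q > 1`. What remains is
`∑_Q 2^{-k_Q(n-sp)} ∑_{R ∈ 𝒞(Q)} w_R^p b_R^p`; exchanging the order of summation and splitting
`2^{-k_Q(n-sp)} = 2^{-j_R(n-sp)} 2^{(j_R-k_Q)(n-sp)}` turns the inner sum over the shadow `𝒮(R)`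
into exactly the quantity bounded by `σ`.
-/

open Finset
open scoped ENNReal

namespace ENNReal

theorem rpow_sum_le_sum_inv_rpow_mul_sum_rpow {α : Type*} (s : Finset α) (w b : α → ℝ≥0∞)
    {p q : ℝ} (hpq : p.HolderConjugate q) (hw₀ : ∀ x ∈ s, w x ≠ 0) (hw : ∀ x ∈ s, w x ≠ ⊤) :
    (∑ x ∈ s, b x) ^ p ≤ (∑ x ∈ s, (w x)⁻¹ ^ q) ^ (p - 1) * ∑ x ∈ s, w x ^ p * b x ^ p := by
  have hb : ∑ x ∈ s, b x = ∑ x ∈ s, (w x)⁻¹ * (w x * b x) := sum_congr rfl fun x hx => by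
    rw [← mul_assoc, ENNReal.inv_mul_cancel (hw₀ x hx) (hw x hx), one_mul]
  have hq : 1 / q * p = p - 1 := by rw [← hpq.div_conj_eq_sub_one]; ring
  calc (∑ x ∈ s, b x) ^ p
      ≤ ((∑ x ∈ s, (w x)⁻¹ ^ q) ^ (1 / q) * (∑ x ∈ s, (w x * b x) ^ p) ^ (1 / p)) ^ p :=
        hb ▸ rpow_le_rpow (inner_le_Lp_mul_Lq s _ _ hpq.symm) hpq.nonneg
    _ = _ := by
        simp only [mul_rpow_of_nonneg _ _ hpq.nonneg, ← rpow_mul, hq,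
          one_div_mul_cancel hpq.ne_zero, rpow_one]

theorem sum_comp_le_mul_tsum {α β : Type*} [DecidableEq β] {s : Finset α} {g : α → β} {N : ℕ}
    (hg : ∀ y, #{x ∈ s | g x = y} ≤ N) (f : β → ℝ≥0∞) :
    ∑ x ∈ s, f (g x) ≤ N * ∑' y, f y := by
  rw [sum_comp]
  calc ∑ y ∈ s.image g, #{x ∈ s | g x = y} • f y ≤ ∑ y ∈ s.image g, N * f y :=
        sum_le_sum fun y _ => by rw [nsmul_eq_mul]; gcongr; exact_mod_cast hg y
    _ ≤ N * ∑' y, f y := by rw [← mul_sum]; gcongr; exact ENNReal.sum_le_tsum _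

theorem tsum_sum_eq_tsum_tsum_subtype {ι ρ : Type*} (t : ι → Finset ρ) (F : ι → ρ → ℝ≥0∞) :
    ∑' i, ∑ r ∈ t i, F i r = ∑' r, ∑' i : {i // r ∈ t i}, F i r := by
  rw [tsum_congr fun i => sum_eq_tsum_indicator (F i) (t i), ENNReal.tsum_comm]
  congr with r
  refine Eq.trans ?_ (tsum_subtype {i | r ∈ t i} (F · r)).symm
  congr with i

theorem tsum_mul_le_of_le_sum_of_tsum_subtype_le {ι ρ : Type*} (t : ι → Finset ρ)
    {u F : ι → ℝ≥0∞} {v B : ρ → ℝ≥0∞} {c : ι → ρ → ℝ≥0∞} {K S : ℝ≥0∞}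
    (hF : ∀ i, F i ≤ K * ∑ r ∈ t i, c i r * B r)
    (hS : ∀ r, ∑' i : {i // r ∈ t i}, u i * c i r ≤ S * v r) :
    ∑' i, u i * F i ≤ K * S * ∑' r, v r * B r :=
  calc ∑' i, u i * F i ≤ ∑' i, K * ∑ r ∈ t i, u i * c i r * B r :=
        ENNReal.tsum_le_tsum fun i => (mul_le_mul_right (hF i) _).trans_eq <| by
          rw [mul_left_comm, mul_sum]
          simp only [mul_assoc]
    _ = K * ∑' r, (∑' i : {i // r ∈ t i}, u i * c i r) * B r := by
        simp_rw [ENNReal.tsum_mul_left, tsum_sum_eq_tsum_tsum_subtype, ENNReal.tsum_mul_right]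
    _ ≤ K * ∑' r, S * v r * B r := by gcongr with r; exact hS r
    _ = K * S * ∑' r, v r * B r := by simp_rw [mul_assoc, ENNReal.tsum_mul_left]

end ENNReal

theorem sum_inv_ofReal_level_gap_rpow_le {ρ : Type*} {t : Finset ρ} {lv : ρ → ℤ} {k : ℤ}
    {τ N : ℕ} (q : ℝ) (hlv : ∀ R ∈ t, lv R ≤ k + τ) (hcard : ∀ j, #{R ∈ t | lv R = j} ≤ N) :
    ∑ R ∈ t, (ENNReal.ofReal (τ + 1 + k - lv R))⁻¹ ^ q ≤
      N * ∑' m : ℕ, ENNReal.ofReal (((m : ℝ) + 1) ^ (-q)) := by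
  let gap : ρ → ℕ := fun R => (k + τ - lv R).toNat
  have hgap : ∀ R ∈ t, (τ + 1 + k - lv R : ℝ) = gap R + 1 := fun R hR => by
    have : ((gap R : ℤ) : ℝ) = ((k + τ - lv R : ℤ) : ℝ) := by
      have := hlv R hR; simp only [gap]; congr 1; omega
    push_cast at this; linarith
  calc ∑ R ∈ t, (ENNReal.ofReal (τ + 1 + k - lv R))⁻¹ ^ q
      = ∑ R ∈ t, ENNReal.ofReal (((gap R : ℝ) + 1) ^ (-q)) := sum_congr rfl fun R hR => by
        rw [hgap R hR, ENNReal.inv_rpow, ← ENNReal.rpow_neg,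
          ENNReal.ofReal_rpow_of_pos (by positivity)]
    _ ≤ _ := ENNReal.sum_comp_le_mul_tsum (g := gap) (fun m => (card_le_card fun R hR => ?_).trans
        (hcard (k + τ - m))) fun m => ENNReal.ofReal (((m : ℝ) + 1) ^ (-q))
  simp only [mem_filter, gap] at hR ⊢
  exact ⟨hR.1, by have := hlv R hR.1; omega⟩

theorem rpow_sum_le_level_gap_weighted {ρ : Type*} {t : Finset ρ} {lv : ρ → ℤ} {k : ℤ}
    {τ N : ℕ} {p q : ℝ} (hpq : p.HolderConjugate q) (hlv : ∀ R ∈ t, lv R ≤ k + τ)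
    (hcard : ∀ j, #{R ∈ t | lv R = j} ≤ N) (b : ρ → ℝ≥0∞) :
    (∑ R ∈ t, b R) ^ p ≤ (N * ∑' m : ℕ, ENNReal.ofReal (((m : ℝ) + 1) ^ (-q))) ^ (p - 1) *
      ∑ R ∈ t, ENNReal.ofReal (τ + 1 + k - lv R) ^ p * b R ^ p := by
  have hpos : ∀ R ∈ t, (0 : ℝ) < τ + 1 + k - lv R := fun R hR => by
    have : (lv R : ℝ) ≤ k + τ := by exact_mod_cast hlv R hR
    linarith
  have hdual := sum_inv_ofReal_level_gap_rpow_le q hlv hcard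
  refine (ENNReal.rpow_sum_le_sum_inv_rpow_mul_sum_rpow t _ b hpq
    (fun R hR => (ENNReal.ofReal_pos.mpr (hpos R hR)).ne') fun _ _ => ENNReal.ofReal_ne_top).trans
    (mul_le_mul_left (ENNReal.rpow_le_rpow hdual (by linarith [hpq.lt])) _)

theorem stmt18_general (n : ℕ) (s p : ℝ) (τ : ℕ) (σ : ℝ) (hp : 1 < p) (hσ : 0 < σ) :
    ∃ C : ℝ, 0 < C ∧
      ∀ (ι ρ : Type) (lvQ : ι → ℤ) (lvR : ρ → ℤ) (chain : ι → Finset ρ) (b : ρ → ℝ≥0∞),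
        -- each element of the chain of `Q` lives at level at most `lvQ Q + τ`
        (∀ Q : ι, ∀ R ∈ chain Q, lvR R ≤ lvQ Q + τ) →
        -- at most `2^τ` elements of each chain per level
        (∀ (Q : ι) (j : ℤ), ((chain Q).filter fun R => lvR R = j).card ≤ 2 ^ τ) →
        -- shadow summability condition
        (∀ R : ρ,
          (∑' Q : {Q : ι // R ∈ chain Q},
            ENNReal.ofReal ((2 : ℝ) ^ (((lvR R : ℝ) - (lvQ Q.1 : ℝ)) * ((n : ℝ) - s * p)) *
              ((τ : ℝ) + 1 + (lvQ Q.1 : ℝ) - (lvR R : ℝ)) ^ p)) ≤ ENNReal.ofReal σ) →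
        (∑' Q : ι, ENNReal.ofReal ((2 : ℝ) ^ (-(lvQ Q : ℝ) * ((n : ℝ) - s * p))) *
            (∑ R ∈ chain Q, b R) ^ p)
          ≤ ENNReal.ofReal C *
            ∑' R : ρ, ENNReal.ofReal ((2 : ℝ) ^ (-(lvR R : ℝ) * ((n : ℝ) - s * p))) * b R ^ p := by
  have hpq : p.HolderConjugate (p / (p - 1)) := .conjExponent hp
  set q := p / (p - 1)
  have hsum : Summable fun m : ℕ => ((m : ℝ) + 1) ^ (-q) := by
    simpa using (summable_nat_add_iff 1).mpr (Real.summable_nat_rpow.mpr (neg_lt_neg hpq.symm.lt))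
  set Z := ∑' m : ℕ, ((m : ℝ) + 1) ^ (-q)
  have hZ : 0 < Z := hsum.tsum_pos (fun m => by positivity) 0 (by simp)
  have hK : ENNReal.ofReal ((2 ^ τ * Z) ^ (p - 1)) =
      (((2 ^ τ : ℕ) : ℝ≥0∞) * ∑' m : ℕ, ENNReal.ofReal (((m : ℝ) + 1) ^ (-q))) ^ (p - 1) := by
    rw [← ENNReal.ofReal_tsum_of_nonneg (fun m => by positivity) hsum,
      ← ENNReal.ofReal_rpow_of_pos (by positivity), ENNReal.ofReal_mul (by positivity)]
    simp [Z]
  refine ⟨(2 ^ τ * Z) ^ (p - 1) * σ, by positivity, fun ι ρ lvQ lvR chain b hlv hcard hshadow => ?_⟩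
  rw [ENNReal.ofReal_mul (by positivity), hK]
  refine ENNReal.tsum_mul_le_of_le_sum_of_tsum_subtype_le chain
    (fun Q => rpow_sum_le_level_gap_weighted hpq (hlv Q) (hcard Q) b) fun R => ?_
  calc ∑' Q : {Q // R ∈ chain Q}, _
      = ∑' Q : {Q // R ∈ chain Q}, ENNReal.ofReal (2 ^ (-(lvR R : ℝ) * (n - s * p))) *
          ENNReal.ofReal (2 ^ (((lvR R : ℝ) - lvQ Q) * (n - s * p)) *
            (τ + 1 + lvQ Q - lvR R) ^ p) := tsum_congr fun ⟨Q, hQ⟩ => by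
        have : (lvR R : ℝ) ≤ lvQ Q + τ := by exact_mod_cast hlv Q R hQ
        rw [ENNReal.ofReal_rpow_of_pos (by linarith), ← ENNReal.ofReal_mul (by positivity),
          ← ENNReal.ofReal_mul (by positivity), ← mul_assoc, ← Real.rpow_add two_pos]
        ring_nf
    _ ≤ ENNReal.ofReal σ * ENNReal.ofReal (2 ^ (-(lvR R : ℝ) * (n - s * p))) := by
        rw [ENNReal.tsum_mul_left, mul_comm]
        gcongr
        exact hshadow R

theorem stmt18 (n : ℕ) (s p : ℝ) (τ : ℕ) (σ : ℝ) (hp : 1 < p) (hσ : 0 < σ)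
    (hns : 0 < (n : ℝ) - s * p) :
    ∃ C : ℝ, 0 < C ∧
      ∀ (ι ρ : Type) (lvQ : ι → ℤ) (lvR : ρ → ℤ) (chain : ι → Finset ρ) (b : ρ → ℝ≥0∞),
        -- each element of the chain of `Q` lives at level at most `lvQ Q + τ`
        (∀ Q : ι, ∀ R ∈ chain Q, lvR R ≤ lvQ Q + τ) →
        -- at most `2^τ` elements of each chain per level
        (∀ (Q : ι) (j : ℤ), ((chain Q).filter fun R => lvR R = j).card ≤ 2 ^ τ) →
        -- shadow summability condition
        (∀ R : ρ,
          (∑' Q : {Q : ι // R ∈ chain Q},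
            ENNReal.ofReal ((2 : ℝ) ^ (((lvR R : ℝ) - (lvQ Q.1 : ℝ)) * ((n : ℝ) - s * p)) *
              ((τ : ℝ) + 1 + (lvQ Q.1 : ℝ) - (lvR R : ℝ)) ^ p)) ≤ ENNReal.ofReal σ) →
        (∑' Q : ι, ENNReal.ofReal ((2 : ℝ) ^ (-(lvQ Q : ℝ) * ((n : ℝ) - s * p))) *
            (∑ R ∈ chain Q, b R) ^ p)
          ≤ ENNReal.ofReal C *
            ∑' R : ρ, ENNReal.ofReal ((2 : ℝ) ^ (-(lvR R : ℝ) * ((n : ℝ) - s * p))) * b R ^ p :=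
  stmt18_general n s p τ σ hp hσ
end
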